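/- For Gaussians p = N(μ₁, Σ₁) and q = N(μ₂, Σ₂) on ℝⁿ, the quantity (‖μ₁ − μ₂‖₂² + ‖Σ₁^{1/2} − Σ₂^{1/2}‖_F²)^{1/2} is greater than or equal to the 2-Wasserstein distance W₂(p, q) = (‖μ₁ − μ₂‖₂² + Tr(Σ₁ + Σ₂ − 2(Σ₁^{1/2} Σ₂ Σ₁^{1/2})^{1/2}))^{1/2}, with equality when Σ₁ and Σ₂ commute. -/

import Mathlib

open Matrix

/-- The positive semidefinite square root of a positive semidefinite matrix
(the definition `Matrix.PosSemidef.sqrt` of the older Mathlib, since removed). -/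
noncomputable def Matrix.PosSemidef.sqrt {n : Type*} [Fintype n] [DecidableEq n]
    {A : Matrix n n ℝ} (hA : A.PosSemidef) : Matrix n n ℝ :=
  hA.1.eigenvectorUnitary.1 * diagonal ((↑) ∘ (fun x => Real.sqrt x) ∘ hA.1.eigenvalues) *
    (star hA.1.eigenvectorUnitary : Matrix n n ℝ)

/-!
With `A = S₁^{1/2}` and `B = S₂^{1/2}` symmetric, `∑ᵢⱼ (Aᵢⱼ - Bᵢⱼ)² = Tr(S₁ + S₂ - 2AB)`, so the
inequality is `Tr(BA) ≤ Tr |BA|`, where `|N| = (NᵀN)^{1/2}` and `(BA)ᵀ(BA) = A S₂ A`.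
For an orthonormal eigenbasis `vᵢ` of `|N|` with eigenvalues `λᵢ ≥ 0`,
`‖N vᵢ‖² = ⟪vᵢ, |N|² vᵢ⟫ = λᵢ²`, so Cauchy–Schwarz gives `⟪vᵢ, N vᵢ⟫ ≤ λᵢ`; summing over `i`
gives `Tr N ≤ Tr |N|`. If `S₁` and `S₂` commute then so do `A` and `B`, and `AB` is then a
positive semidefinite square root of `A S₂ A`, so the two traces agree.
-/

open scoped MatrixOrder

section CFC

variable {A : Type*} [Ring A] [StarRing A] [PartialOrder A] [StarOrderedRing A]
  [TopologicalSpace A] [IsTopologicalRing A] [T2Space A] [Algebra ℝ A]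
  [ContinuousFunctionalCalculus ℝ A IsSelfAdjoint] [NonnegSpectrumClass ℝ A]

theorem Commute.cfcSqrt_left {a b : A} (h : Commute a b) : Commute (CFC.sqrt a) b := by
  rw [CFC.sqrt_eq_cfc]
  exact h.cfc_nnreal _

theorem CFC.sqrt_sqrt_mul_mul_sqrt_of_commute {a b : A} (hb : 0 ≤ b) (h : Commute a b) :
    CFC.sqrt (CFC.sqrt a * b * CFC.sqrt a) = CFC.sqrt a * CFC.sqrt b := by
  have hab : Commute (CFC.sqrt a) b := h.cfcSqrt_left
  have hab' : Commute (CFC.sqrt a) (CFC.sqrt b) := hab.symm.cfcSqrt_left.symm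
  refine CFC.sqrt_unique ?_ (hab'.mul_nonneg (CFC.sqrt_nonneg a) (CFC.sqrt_nonneg b))
  calc CFC.sqrt a * CFC.sqrt b * (CFC.sqrt a * CFC.sqrt b)
      = CFC.sqrt a * CFC.sqrt a * (CFC.sqrt b * CFC.sqrt b) := hab'.symm.mul_mul_mul_comm _ _
    _ = CFC.sqrt a * b * CFC.sqrt a := by
      rw [CFC.sqrt_mul_sqrt_self b hb, hab.right_comm]

end CFC

namespace Matrix

variable {m : Type*} [Fintype m]

theorem sum_sq_apply_eq_trace_transpose_mul_self {n : Type*} [Fintype n] (X : Matrix m n ℝ) :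
    ∑ i, ∑ j, X i j ^ 2 = (Xᵀ * X).trace := by
  rw [Finset.sum_comm]
  simp [trace, mul_apply, sq]

theorem sum_sq_sub_apply_eq_trace {X Y : Matrix m m ℝ} (hX : Xᵀ = X) (hY : Yᵀ = Y) :
    ∑ i, ∑ j, (X i j - Y i j) ^ 2 = (X * X + Y * Y - (2 : ℝ) • (X * Y)).trace := by
  have h := sum_sq_apply_eq_trace_transpose_mul_self (X - Y)
  simp only [sub_apply] at h
  rw [h, transpose_sub, hX, hY]
  simp only [sub_mul, mul_sub, trace_sub, trace_add, trace_smul, trace_mul_comm Y X, smul_eq_mul]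
  ring

variable [DecidableEq m]

theorem PosSemidef.sqrt_eq_cfcSqrt {M : Matrix m m ℝ} (hM : M.PosSemidef) :
    hM.sqrt = CFC.sqrt M := by
  rw [CFC.sqrt_eq_cfc, cfc_nnreal_eq_real _ M hM.nonneg, hM.1.cfc_eq]
  unfold PosSemidef.sqrt IsHermitian.cfc
  congr 3
  funext i
  simp [hM.eigenvalues_nonneg i]

theorem transpose_cfcSqrt (M : Matrix m m ℝ) : (CFC.sqrt M)ᵀ = CFC.sqrt M := by
  rw [← conjTranspose_eq_transpose_of_trivial]
  exact (CFC.sqrt_nonneg M).posSemidef.1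

theorem norm_toEuclideanLin_eigenvectorBasis {N C : Matrix m m ℝ} (hC : C.PosSemidef)
    (h : C * C = Nᵀ * N) (i : m) :
    ‖toEuclideanLin N (hC.1.eigenvectorBasis i)‖ = hC.1.eigenvalues i := by
  set v := hC.1.eigenvectorBasis i
  have hCv : C *ᵥ v = hC.1.eigenvalues i • v := hC.1.mulVec_eigenvectorBasis i
  have hv : v ⬝ᵥ v = 1 := by
    have := real_inner_self_eq_norm_sq v
    rwa [hC.1.eigenvectorBasis.orthonormal.1 i, EuclideanSpace.inner_eq_star_dotProduct,
      star_trivial, one_pow] at this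
  have hsq : ‖toEuclideanLin N v‖ ^ 2 = hC.1.eigenvalues i ^ 2 := by
    rw [← real_inner_self_eq_norm_sq, EuclideanSpace.inner_eq_star_dotProduct, star_trivial,
      toLpLin_apply, dotProduct_mulVec, ← vecMul_transpose, vecMul_vecMul, ← dotProduct_mulVec,
      ← h, ← mulVec_mulVec, hCv, mulVec_smul, hCv]
    simp [hv, sq]
  rwa [← sq_eq_sq₀ (norm_nonneg _) (hC.eigenvalues_nonneg i)]

theorem trace_le_trace_of_mul_self_eq_transpose_mul {N C : Matrix m m ℝ} (hC : C.PosSemidef)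
    (h : C * C = Nᵀ * N) : N.trace ≤ C.trace := by
  let b := hC.1.eigenvectorBasis
  calc N.trace = ∑ i, inner ℝ (b i) (toEuclideanLin N (b i)) := by
        rw [← LinearMap.trace_eq_sum_inner, toEuclideanLin_eq_toLin_orthonormal, trace_toLin_eq]
    _ ≤ ∑ i, ‖b i‖ * ‖toEuclideanLin N (b i)‖ := by
        gcongr with i
        exact real_inner_le_norm _ _
    _ = C.trace := by
        simp only [b.orthonormal.1, one_mul, b, norm_toEuclideanLin_eigenvectorBasis hC h]
        simp [hC.1.trace_eq_sum_eigenvalues]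

theorem trace_cfcSqrt_mul_cfcSqrt_le {S T : Matrix m m ℝ} (hT : T.PosSemidef) :
    (CFC.sqrt S * CFC.sqrt T).trace ≤ (CFC.sqrt (CFC.sqrt S * T * CFC.sqrt S)).trace := by
  rw [trace_mul_comm]
  refine trace_le_trace_of_mul_self_eq_transpose_mul (CFC.sqrt_nonneg _).posSemidef ?_
  rw [CFC.sqrt_mul_sqrt_self _ (conjugate_nonneg_of_nonneg hT.nonneg (CFC.sqrt_nonneg S)),
    transpose_mul, transpose_cfcSqrt, transpose_cfcSqrt]
  simp only [mul_assoc]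
  rw [← mul_assoc (CFC.sqrt T) (CFC.sqrt T), CFC.sqrt_mul_sqrt_self T hT.nonneg]

end Matrix

/-- For Gaussians `p = N(μ₁, S₁)` and `q = N(μ₂, S₂)` on `ℝⁿ`, the probability
flow distance `(‖μ₁ − μ₂‖₂² + ‖S₁^{1/2} − S₂^{1/2}‖_F²)^{1/2}` is at least the
2-Wasserstein distance
`(‖μ₁ − μ₂‖₂² + Tr(S₁ + S₂ − 2(S₁^{1/2} S₂ S₁^{1/2})^{1/2}))^{1/2}`,
with equality when `S₁` and `S₂` commute. -/
theorem gaussian_w2_le_pfd {n : ℕ} (μ₁ μ₂ : EuclideanSpace ℝ (Fin n))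
    {S₁ S₂ : Matrix (Fin n) (Fin n) ℝ}
    (h₁ : S₁.PosSemidef) (h₂ : S₂.PosSemidef)
    (hP : (h₁.sqrt * S₂ * h₁.sqrt).PosSemidef) :
    Real.sqrt (‖μ₁ - μ₂‖ ^ 2 + (S₁ + S₂ - (2 : ℝ) • hP.sqrt).trace) ≤
      Real.sqrt (‖μ₁ - μ₂‖ ^ 2 + ∑ i, ∑ j, (h₁.sqrt i j - h₂.sqrt i j) ^ 2) ∧
    (S₁ * S₂ = S₂ * S₁ →
      Real.sqrt (‖μ₁ - μ₂‖ ^ 2 + (S₁ + S₂ - (2 : ℝ) • hP.sqrt).trace) =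
        Real.sqrt (‖μ₁ - μ₂‖ ^ 2 + ∑ i, ∑ j, (h₁.sqrt i j - h₂.sqrt i j) ^ 2)) := by
  have hP_sqrt : hP.sqrt = CFC.sqrt (CFC.sqrt S₁ * S₂ * CFC.sqrt S₁) := by
    rw [hP.sqrt_eq_cfcSqrt, h₁.sqrt_eq_cfcSqrt]
  have hfrob : ∑ i, ∑ j, (h₁.sqrt i j - h₂.sqrt i j) ^ 2 =
      (S₁ + S₂ - (2 : ℝ) • (CFC.sqrt S₁ * CFC.sqrt S₂)).trace := by
    rw [h₁.sqrt_eq_cfcSqrt, h₂.sqrt_eq_cfcSqrt,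
      sum_sq_sub_apply_eq_trace (transpose_cfcSqrt S₁) (transpose_cfcSqrt S₂),
      CFC.sqrt_mul_sqrt_self S₁ h₁.nonneg, CFC.sqrt_mul_sqrt_self S₂ h₂.nonneg]
  rw [hP_sqrt, hfrob]
  refine ⟨Real.sqrt_le_sqrt ?_, fun hcomm ↦ ?_⟩
  · have htrace := trace_cfcSqrt_mul_cfcSqrt_le (S := S₁) h₂
    simp only [trace_sub, trace_add, trace_smul, smul_eq_mul]
    linarith
  · rw [CFC.sqrt_sqrt_mul_mul_sqrt_of_commute h₂.nonneg hcomm]
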